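/- arXiv:2602.08033 — 4 statements merged into one kernel-verified Lean document; each statement's English description precedes it below -/
import Mathlib

section
/- Let (C, R) be a SCoRa dataset over A entities with embedding x ∈ ℝ^{D×A}, root laws f and g, and prior variances σ_β², σ_0² > 0. Define the augmented embedding x̃ ∈ ℝ^{(D+1)×(A+1)} by x̃_a = (x_a, 0) for a ∈ {1,…,A} and x̃_{A+1} = (0,…,0,1), the covariance Σ̃ = Diag(σ_β², …, σ_β², σ_0²) ∈ ℝ^{(D+1)×(D+1)}, and the flexible-GBT dataset D̃ obtained by mapping each comparison (b, c, r) ∈ C to the tuple (b, c, r, f) and each rating (a, t) ∈ R to the tuple (a, A+1, t, g). Then for every β ∈ ℝ^D and θ_0 ∈ ℝ, the flexible-GBT negative log-posterior of β̃ = (β, θ_0) ∈ ℝ^{D+1} with embedding x̃ and covariance Σ̃ on the dataset D̃ equals the SCoRa negative log-posterior: L_FGBT(β̃ | D̃) = L_SCoRa(β, θ_0 | C, R). -/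
/-! Writing `β̃ = (β, θ₀)`, the augmented differences are `x̃_b - x̃_c = (x_b - x_c, 0)` and
`x̃_a - x̃_{A+1} = (x_a, -1)`, whose inner products with `β̃` are `(x_b - x_c)ᵀβ` and
`x_aᵀβ - θ₀`; and the diagonal prior `β̃ᵀ Σ̃⁻¹ β̃` splits as `‖β‖²/σ_β² + θ₀²/σ₀²`.
The two losses then agree term by term. -/

open MeasureTheory RealInnerProductSpace

noncomputable section

/-- The cumulant generating function `Φ_μ(θ) = log ∫ exp(θ r) dμ(r)` of a measure `μ` on `ℝ`. -/
def cgfm (μ : Measure ℝ) (θ : ℝ) : ℝ := Real.log (∫ r, Real.exp (θ * r) ∂μ)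

/-- `μ` has finite exponential moments: `∫ exp(θ r) dμ(r) < ∞` for every `θ`. -/
def HasExpMoments (μ : Measure ℝ) : Prop :=
  ∀ θ : ℝ, Integrable (fun r => Real.exp (θ * r)) μ

/-- The SCoRa negative log-posterior `L(β, θ0 | D)` for a dataset consisting of a multiset `C`
of comparisons `(b, c, r)` and a multiset `Rt` of ratings `(a, t)`, with embedding columns
`x a ∈ ℝ^D`, comparison root law `f`, rating root law `g`, and prior variances `sb2 = σ_β²`,
`s02 = σ_0²`. -/
def scoraLoss {Dd A : ℕ} (x : Fin A → EuclideanSpace ℝ (Fin Dd))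
    (f g : Measure ℝ) (sb2 s02 : ℝ)
    (C : Multiset (Fin A × Fin A × ℝ)) (Rt : Multiset (Fin A × ℝ))
    (β : EuclideanSpace ℝ (Fin Dd)) (θ0 : ℝ) : ℝ :=
  ‖β‖ ^ 2 / (2 * sb2) + θ0 ^ 2 / (2 * s02)
    + (C.map (fun q =>
        cgfm f ⟪x q.1 - x q.2.1, β⟫ - q.2.2 * ⟪x q.1 - x q.2.1, β⟫)).sum
    + (Rt.map (fun q =>
        cgfm g (⟪x q.1, β⟫ - θ0) - q.2 * (⟪x q.1, β⟫ - θ0))).sum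

/-- The quadratic form `v ↦ vᵀ M v`. -/
def quadForm {n : ℕ} (M : Matrix (Fin n) (Fin n) ℝ) (v : EuclideanSpace ℝ (Fin n)) : ℝ :=
  ∑ i, ∑ j, v i * M i j * v j

/-- The flexible-GBT negative log-posterior `L(β | D)` for a dataset `data` consisting of
comparisons `(a, b, r, f)` (entities `a, b`, value `r`, root law `f`), with embedding columns
`x a ∈ ℝ^D` and prior covariance matrix `S = Σ_β`. -/
def fgbtLoss {Dd A : ℕ} (x : Fin A → EuclideanSpace ℝ (Fin Dd))
    (S : Matrix (Fin Dd) (Fin Dd) ℝ)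
    (data : Multiset (Fin A × Fin A × ℝ × Measure ℝ))
    (β : EuclideanSpace ℝ (Fin Dd)) : ℝ :=
  (1 / 2) * quadForm S⁻¹ β
    + (data.map (fun q =>
        cgfm q.2.2.2 ⟪x q.1 - x q.2.1, β⟫ - q.2.2.1 * ⟪x q.1 - x q.2.1, β⟫)).sum

/-- The augmented embedding `x̃ ∈ ℝ^{(D+1)×(A+1)}`: `x̃_a = (x_a, 0)` for `a ∈ {1,…,A}` and
`x̃_{A+1} = (0,…,0,1)`. -/
def augEmb {Dd A : ℕ} (x : Fin A → EuclideanSpace ℝ (Fin Dd)) :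
    Fin (A + 1) → EuclideanSpace ℝ (Fin (Dd + 1)) :=
  Fin.snoc (fun a => WithLp.toLp 2 (Fin.snoc (WithLp.ofLp (x a)) 0))
    (WithLp.toLp 2 (Fin.snoc (WithLp.ofLp (0 : EuclideanSpace ℝ (Fin Dd))) 1))

namespace EuclideanSpace

variable {𝕜 : Type*} [RCLike 𝕜] {n : ℕ}

theorem toLp_snoc_sub_toLp_snoc (v w : EuclideanSpace 𝕜 (Fin n)) (a b : 𝕜) :
    (WithLp.toLp 2 (Fin.snoc (WithLp.ofLp v) a) : EuclideanSpace 𝕜 (Fin (n + 1)))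
      - WithLp.toLp 2 (Fin.snoc (WithLp.ofLp w) b)
      = WithLp.toLp 2 (Fin.snoc (WithLp.ofLp (v - w)) (a - b)) := by
  ext i
  induction i using Fin.lastCases <;> simp

theorem inner_toLp_snoc_toLp_snoc (v w : EuclideanSpace 𝕜 (Fin n)) (a b : 𝕜) :
    inner 𝕜 (WithLp.toLp 2 (Fin.snoc (WithLp.ofLp v) a) : EuclideanSpace 𝕜 (Fin (n + 1)))
      (WithLp.toLp 2 (Fin.snoc (WithLp.ofLp w) b)) = inner 𝕜 v w + inner 𝕜 a b := by
  simp [PiLp.inner_apply, Fin.sum_univ_castSucc]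

end EuclideanSpace

theorem quadForm_diagonal {n : ℕ} (d : Fin n → ℝ) (v : EuclideanSpace ℝ (Fin n)) :
    quadForm (Matrix.diagonal d) v = ∑ i, v i ^ 2 * d i := by
  simp only [quadForm, Matrix.diagonal_apply, mul_ite, ite_mul, mul_zero, zero_mul,
    Finset.sum_ite_eq, Finset.mem_univ, if_true]
  exact Finset.sum_congr rfl fun i _ => by ring

theorem quadForm_inv_diagonal {n : ℕ} (d : Fin n → ℝ) (hd : ∀ i, d i ≠ 0)
    (v : EuclideanSpace ℝ (Fin n)) :
    quadForm (Matrix.diagonal d)⁻¹ v = ∑ i, v i ^ 2 / d i := by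
  have hinv : (Matrix.diagonal d)⁻¹ = Matrix.diagonal d⁻¹ := by
    refine Matrix.inv_eq_right_inv ?_
    rw [Matrix.diagonal_mul_diagonal, ← Matrix.diagonal_one]
    exact congrArg Matrix.diagonal (funext fun i => mul_inv_cancel₀ (hd i))
  simp [hinv, quadForm_diagonal, div_eq_mul_inv]

theorem quadForm_inv_diagonal_snoc {n : ℕ} {s s₀ : ℝ} (hs : s ≠ 0) (hs₀ : s₀ ≠ 0)
    (β : EuclideanSpace ℝ (Fin n)) (θ₀ : ℝ) :
    quadForm (Matrix.diagonal (Fin.snoc (fun _ : Fin n => s) s₀))⁻¹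
        (WithLp.toLp 2 (Fin.snoc (WithLp.ofLp β) θ₀)) = ‖β‖ ^ 2 / s + θ₀ ^ 2 / s₀ := by
  have hd : ∀ i, Fin.snoc (α := fun _ => ℝ) (fun _ : Fin n => s) s₀ i ≠ 0 :=
    Fin.lastCases (by simpa using hs₀) (fun _ => by simpa using hs)
  rw [quadForm_inv_diagonal _ hd, Fin.sum_univ_castSucc, EuclideanSpace.norm_sq_eq,
    Finset.sum_div]
  simp

section augEmb

variable {Dd A : ℕ} (x : Fin A → EuclideanSpace ℝ (Fin Dd)) (β : EuclideanSpace ℝ (Fin Dd))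
  (θ₀ : ℝ)

theorem inner_augEmb_castSucc_sub_castSucc (b c : Fin A) :
    ⟪augEmb x b.castSucc - augEmb x c.castSucc, WithLp.toLp 2 (Fin.snoc (WithLp.ofLp β) θ₀)⟫
      = ⟪x b - x c, β⟫ := by
  simp only [augEmb, Fin.snoc_castSucc, EuclideanSpace.toLp_snoc_sub_toLp_snoc,
    EuclideanSpace.inner_toLp_snoc_toLp_snoc]
  simp

theorem inner_augEmb_castSucc_sub_last (a : Fin A) :
    ⟪augEmb x a.castSucc - augEmb x (Fin.last A), WithLp.toLp 2 (Fin.snoc (WithLp.ofLp β) θ₀)⟫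
      = ⟪x a, β⟫ - θ₀ := by
  simp only [augEmb, Fin.snoc_castSucc, Fin.snoc_last, EuclideanSpace.toLp_snoc_sub_toLp_snoc,
    EuclideanSpace.inner_toLp_snoc_toLp_snoc]
  simp [sub_eq_add_neg]

end augEmb

theorem scora_is_flexible_gbt_general
    {Dd A : ℕ} (x : Fin A → EuclideanSpace ℝ (Fin Dd))
    (f g : Measure ℝ)
    (sb2 s02 : ℝ) (hsb : 0 < sb2) (hs0 : 0 < s02)
    (C : Multiset (Fin A × Fin A × ℝ)) (Rt : Multiset (Fin A × ℝ))
    (β : EuclideanSpace ℝ (Fin Dd)) (θ0 : ℝ) :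
    fgbtLoss (augEmb x) (Matrix.diagonal (Fin.snoc (fun _ : Fin Dd => sb2) s02))
      (C.map (fun q => (Fin.castSucc q.1, Fin.castSucc q.2.1, q.2.2, f))
        + Rt.map (fun q => (Fin.castSucc q.1, Fin.last A, q.2, g)))
      (WithLp.toLp 2 (Fin.snoc (WithLp.ofLp β) θ0))
      = scoraLoss x f g sb2 s02 C Rt β θ0 := by
  simp only [fgbtLoss, scoraLoss, Multiset.map_add, Multiset.sum_add, Multiset.map_map,
    Function.comp_def, inner_augEmb_castSucc_sub_castSucc, inner_augEmb_castSucc_sub_last,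
    quadForm_inv_diagonal_snoc hsb.ne' hs0.ne']
  ring

/-- with the augmented embedding `x̃`, the diagonal covariance
`Σ̃ = Diag(σ_β², …, σ_β², σ_0²)`, and the flexible-GBT dataset obtained by mapping each
comparison `(b, c, r)` to `(b, c, r, f)` and each rating `(a, t)` to `(a, A+1, t, g)`,
the flexible-GBT negative log-posterior of `β̃ = (β, θ0)` equals the SCoRa negative
log-posterior of `(β, θ0)`. -/
theorem scora_is_flexible_gbt
    {Dd A : ℕ} (x : Fin A → EuclideanSpace ℝ (Fin Dd))
    (f g : Measure ℝ) [IsProbabilityMeasure f] [IsProbabilityMeasure g]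
    (hf : HasExpMoments f) (hg : HasExpMoments g)
    (sb2 s02 : ℝ) (hsb : 0 < sb2) (hs0 : 0 < s02)
    (C : Multiset (Fin A × Fin A × ℝ)) (Rt : Multiset (Fin A × ℝ))
    (β : EuclideanSpace ℝ (Fin Dd)) (θ0 : ℝ) :
    fgbtLoss (augEmb x) (Matrix.diagonal (Fin.snoc (fun _ : Fin Dd => sb2) s02))
      (C.map (fun q => (Fin.castSucc q.1, Fin.castSucc q.2.1, q.2.2, f))
        + Rt.map (fun q => (Fin.castSucc q.1, Fin.last A, q.2, g)))
      (WithLp.toLp 2 (Fin.snoc (WithLp.ofLp β) θ0))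
      = scoraLoss x f g sb2 s02 C Rt β θ0 :=
  scora_is_flexible_gbt_general x f g sb2 s02 hsb hs0 C Rt β θ0

end
end

section
/- In the SCoRa model without embeddings (D = A and x the identity matrix, so that θ_a* = β_a*), the MAP estimator (β*, θ_0*) satisfies θ_0* = −(σ_0²/σ_β²) Σ_{a=1}^A θ_a*. -/
/-!
Shifting all scores and the threshold by the same amount `ε` leaves every comparison
difference `θ_b - θ_c` and every rating residual `θ_a - θ_0` unchanged, so only the two Gaussian
prior terms move, and they move along a quadratic in `ε`. At the MAP estimator this quadratic is
minimal at `ε = 0`, so its linear coefficient `Σ_a θ_a* / σ_β² + θ_0* / σ_0²` vanishes.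
-/

open MeasureTheory RealInnerProductSpace

noncomputable section

theorem eq_zero_of_forall_mul_add_sq_mul_nonneg {b c : ℝ} (h : ∀ ε : ℝ, 0 ≤ ε * b + ε ^ 2 * c) :
    b = 0 := by
  have hdiscrim : discrim c b 0 ≤ 0 := discrim_le_zero fun ε => by nlinarith [h ε]
  rw [discrim] at hdiscrim
  nlinarith [sq_nonneg b]

section Shift

variable {Dd A : ℕ} {x : Fin A → EuclideanSpace ℝ (Fin Dd)} {v : EuclideanSpace ℝ (Fin Dd)}

theorem scoraLoss_add_smul_of_inner_eq_one (hv : ∀ a, ⟪x a, v⟫ = 1)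
    (f g : Measure ℝ) (sb2 s02 : ℝ) (C : Multiset (Fin A × Fin A × ℝ))
    (Rt : Multiset (Fin A × ℝ)) (β : EuclideanSpace ℝ (Fin Dd)) (θ0 ε : ℝ) :
    scoraLoss x f g sb2 s02 C Rt (β + ε • v) (θ0 + ε)
      = scoraLoss x f g sb2 s02 C Rt β θ0 + ε * (⟪β, v⟫ / sb2 + θ0 / s02)
        + ε ^ 2 * (‖v‖ ^ 2 / (2 * sb2) + 1 / (2 * s02)) := by
  have hdiff : ∀ b c, ⟪x b - x c, β + ε • v⟫ = ⟪x b - x c, β⟫ := fun b c => by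
    rw [inner_add_right, real_inner_smul_right, inner_sub_left (x b) (x c) v, hv, hv]
    ring
  have hresid : ∀ a, ⟪x a, β + ε • v⟫ - (θ0 + ε) = ⟪x a, β⟫ - θ0 := fun a => by
    rw [inner_add_right, real_inner_smul_right, hv]
    ring
  have hnorm : ‖β + ε • v‖ ^ 2 = ‖β‖ ^ 2 + 2 * ε * ⟪β, v⟫ + ε ^ 2 * ‖v‖ ^ 2 := by
    rw [norm_add_sq_real, real_inner_smul_right, norm_smul, mul_pow, Real.norm_eq_abs, sq_abs]
    ring
  simp only [scoraLoss, hdiff, hresid, hnorm]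
  ring

theorem inner_div_add_div_eq_zero_of_forall_scoraLoss_le (hv : ∀ a, ⟪x a, v⟫ = 1)
    (f g : Measure ℝ) (sb2 s02 : ℝ) (C : Multiset (Fin A × Fin A × ℝ))
    (Rt : Multiset (Fin A × ℝ)) {βs : EuclideanSpace ℝ (Fin Dd)} {θ0s : ℝ}
    (hmin : ∀ β θ0, scoraLoss x f g sb2 s02 C Rt βs θ0s ≤ scoraLoss x f g sb2 s02 C Rt β θ0) :
    ⟪βs, v⟫ / sb2 + θ0s / s02 = 0 :=
  eq_zero_of_forall_mul_add_sq_mul_nonneg (c := ‖v‖ ^ 2 / (2 * sb2) + 1 / (2 * s02)) fun ε => by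
    have := hmin (βs + ε • v) (θ0s + ε)
    rw [scoraLoss_add_smul_of_inner_eq_one hv] at this
    linarith

end Shift

theorem scora_map_threshold_mean_general
    {A : ℕ}
    (f g : Measure ℝ)
    (sb2 s02 : ℝ) (hs0 : 0 < s02)
    (C : Multiset (Fin A × Fin A × ℝ)) (Rt : Multiset (Fin A × ℝ))
    (βs : EuclideanSpace ℝ (Fin A)) (θ0s : ℝ)
    (hmin : ∀ (β : EuclideanSpace ℝ (Fin A)) (θ0 : ℝ),
      scoraLoss (fun a => EuclideanSpace.single a 1) f g sb2 s02 C Rt βs θ0s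
        ≤ scoraLoss (fun a => EuclideanSpace.single a 1) f g sb2 s02 C Rt β θ0) :
    θ0s = -(s02 / sb2) * ∑ a, βs a := by
  set ones : EuclideanSpace ℝ (Fin A) := WithLp.toLp 2 fun _ => 1
  have hones : ∀ a : Fin A, ⟪EuclideanSpace.single a (1 : ℝ), ones⟫ = 1 := fun a => by
    simp [EuclideanSpace.inner_single_left, ones]
  have hsum : ⟪βs, ones⟫ = ∑ a, βs a := by
    simp [PiLp.inner_apply, ones]
  have hcoeff := inner_div_add_div_eq_zero_of_forall_scoraLoss_le hones f g sb2 s02 C Rt hmin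
  rw [hsum] at hcoeff
  calc θ0s = θ0s / s02 * s02 := (div_mul_cancel₀ θ0s hs0.ne').symm
    _ = -((∑ a, βs a) / sb2) * s02 := by rw [eq_neg_of_add_eq_zero_right hcoeff]
    _ = -(s02 / sb2) * ∑ a, βs a := by ring

/-- in the SCoRa model without embeddings (`D = A`, `x = I_A`, so that the
MAP scores are `θ_a* = β_a*`), the MAP estimator `(β*, θ0*)` (the minimizer of the SCoRa
negative log-posterior) satisfies `θ0* = −(σ_0²/σ_β²) Σ_a θ_a*`. -/
theorem scora_map_threshold_mean
    {A : ℕ}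
    (f g : Measure ℝ) [IsProbabilityMeasure f] [IsProbabilityMeasure g]
    (hf : HasExpMoments f) (hg : HasExpMoments g)
    (sb2 s02 : ℝ) (hsb : 0 < sb2) (hs0 : 0 < s02)
    (C : Multiset (Fin A × Fin A × ℝ)) (Rt : Multiset (Fin A × ℝ))
    (βs : EuclideanSpace ℝ (Fin A)) (θ0s : ℝ)
    (hmin : ∀ (β : EuclideanSpace ℝ (Fin A)) (θ0 : ℝ),
      scoraLoss (fun a => EuclideanSpace.single a 1) f g sb2 s02 C Rt βs θ0s
        ≤ scoraLoss (fun a => EuclideanSpace.single a 1) f g sb2 s02 C Rt β θ0) :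
    θ0s = -(s02 / sb2) * ∑ a, βs a :=
  scora_map_threshold_mean_general f g sb2 s02 hs0 C Rt βs θ0s hmin

end
end

section
/- Let G : ℝ^D → ℝ be differentiable and λ-strongly convex for some λ > 0, and let v ∈ ℝ^D. For each r ∈ ℝ, let β*(r) denote the unique minimizer over ℝ^D of the function β ↦ G(β) − r vᵀβ. Then the map r ↦ vᵀ β*(r) is nondecreasing on ℝ. -/
open MeasureTheory RealInnerProductSpace

noncomputable section

/-- if `G : ℝ^D → ℝ` is differentiable and `λ`-strongly convex (`λ > 0`) and,
for each `r ∈ ℝ`, `βstar r` is the (unique) minimizer of `β ↦ G(β) − r vᵀβ`, then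
`r ↦ vᵀ (βstar r)` is nondecreasing. -/
theorem perturbed_minimizer_monotone
    {Dd : ℕ} (G : EuclideanSpace ℝ (Fin Dd) → ℝ)
    (lam : ℝ) (hlam : 0 < lam) (hdiff : Differentiable ℝ G)
    (hconv : ConvexOn ℝ Set.univ fun β => G β - lam / 2 * ‖β‖ ^ 2)
    (v : EuclideanSpace ℝ (Fin Dd)) (βstar : ℝ → EuclideanSpace ℝ (Fin Dd))
    (hmin : ∀ r : ℝ, ∀ β : EuclideanSpace ℝ (Fin Dd),
      G (βstar r) - r * ⟪v, βstar r⟫ ≤ G β - r * ⟪v, β⟫) :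
    Monotone fun r => ⟪v, βstar r⟫ := by
  intro a b hab
  rcases eq_or_lt_of_le hab with rfl | hlt
  · exact le_refl _
  · have h1 := hmin a (βstar b)
    have h2 := hmin b (βstar a)
    simp only
    nlinarith [h1, h2, hlt]

end
end

section
/- The SCoRa MAP estimator is pairwise monotone for comparisons: if two SCoRa datasets D and D' have the same ratings and the same comparisons except that one comparison of the pair (b, c) has value r in D and value r' in D' with r ≥ r', then θ_b*(D) − θ_c*(D) ≥ θ_b*(D') − θ_c*(D'). -/
open MeasureTheory RealInnerProductSpace

noncomputable section

/-!
Write `Δ(β) = ⟪x_b - x_c, β⟫`; changing the value of the comparison `(b, c)` from `r` to `r'`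
only changes the loss by `-(r - r') Δ(β)`. Evaluating the minimality of each MAP estimator at
the other one and adding the two inequalities cancels the common part of the loss and leaves
`(r - r') (Δ(β) - Δ(β')) ≥ 0`, which settles the case `r > r'`. When `r = r'` both are
minimizers of one loss, which is strongly convex in `β` (the cumulant generating functions are
midpoint convex by Cauchy–Schwarz, the prior is a positive definite quadratic), so `β = β'`.
-/

lemma memLp_two_exp_half_mul {μ : Measure ℝ} (hμ : HasExpMoments μ) (a : ℝ) :
    MemLp (fun r => Real.exp (a / 2 * r)) (ENNReal.ofReal 2) μ := by
  rw [ENNReal.ofReal_ofNat, memLp_two_iff_integrable_sq (by fun_prop)]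
  convert hμ a using 2 with r
  rw [← Real.exp_nat_mul]
  ring_nf

lemma cgfm_add_div_two_le {μ : Measure ℝ} (hμ : HasExpMoments μ) (a b : ℝ) :
    cgfm μ ((a + b) / 2) ≤ (cgfm μ a + cgfm μ b) / 2 := by
  rcases eq_or_ne μ 0 with rfl | hμ0
  · simp [cgfm]
  have mgf_pos (t : ℝ) : 0 < ∫ r, Real.exp (t * r) ∂μ :=
    ProbabilityTheory.mgf_pos' hμ0 (hμ t)
  have exp_half_rpow (t : ℝ) :
      (fun r => Real.exp (t / 2 * r) ^ (2 : ℝ)) = fun r => Real.exp (t * r) := by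
    funext r; rw [← Real.exp_mul]; ring_nf
  have holder := integral_mul_le_Lp_mul_Lq_of_nonneg Real.HolderConjugate.two_two
    (.of_forall fun r => (Real.exp_pos _).le) (.of_forall fun r => (Real.exp_pos _).le)
    (memLp_two_exp_half_mul hμ a) (memLp_two_exp_half_mul hμ b)
  simp only [← Real.exp_add, exp_half_rpow] at holder
  have hab :
      (fun r => Real.exp (a / 2 * r + b / 2 * r)) = fun r => Real.exp ((a + b) / 2 * r) := by
    funext r; ring_nf
  rw [hab] at holder
  calc cgfm μ ((a + b) / 2)
      ≤ Real.log ((∫ r, Real.exp (a * r) ∂μ) ^ (1 / 2 : ℝ)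
          * (∫ r, Real.exp (b * r) ∂μ) ^ (1 / 2 : ℝ)) :=
        Real.log_le_log (mgf_pos _) holder
    _ = (cgfm μ a + cgfm μ b) / 2 := by
        rw [Real.log_mul (by positivity [mgf_pos a]) (by positivity [mgf_pos b]),
          Real.log_rpow (mgf_pos a), Real.log_rpow (mgf_pos b), cgfm, cgfm]
        ring

lemma cgfm_sub_mul_add_div_two_le {μ : Measure ℝ} (hμ : HasExpMoments μ) (t u v : ℝ) :
    cgfm μ ((u + v) / 2) - t * ((u + v) / 2)
      ≤ ((cgfm μ u - t * u) + (cgfm μ v - t * v)) / 2 := by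
  linarith [cgfm_add_div_two_le hμ u v]

lemma Multiset.sum_map_le_sum_map_add_div_two {ι P : Type*} (s : Multiset ι) (φ : ι → P → ℝ)
    (p p' m : P) (h : ∀ i ∈ s, φ i m ≤ (φ i p + φ i p') / 2) :
    (s.map (φ · m)).sum ≤ ((s.map (φ · p)).sum + (s.map (φ · p')).sum) / 2 := by
  rw [← Multiset.sum_map_add, ← Multiset.sum_map_div]
  exact Multiset.sum_map_le_sum_map _ _ h

lemma norm_inv_two_smul_add_sq {E : Type*} [NormedAddCommGroup E] [InnerProductSpace ℝ E]
    (u v : E) :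
    ‖(2 : ℝ)⁻¹ • (u + v)‖ ^ 2 = (‖u‖ ^ 2 + ‖v‖ ^ 2) / 2 - ‖u - v‖ ^ 2 / 4 := by
  rw [norm_smul, mul_pow, Real.norm_of_nonneg (by norm_num)]
  linarith [parallelogram_law_with_norm ℝ u v]

lemma scoraLoss_inv_two_smul_add_le {Dd A : ℕ} (x : Fin A → EuclideanSpace ℝ (Fin Dd))
    {f g : Measure ℝ} (hf : HasExpMoments f) (hg : HasExpMoments g) (sb2 s02 : ℝ)
    (C : Multiset (Fin A × Fin A × ℝ)) (Rt : Multiset (Fin A × ℝ))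
    (β β' : EuclideanSpace ℝ (Fin Dd)) (θ0 θ0' : ℝ) :
    scoraLoss x f g sb2 s02 C Rt ((2 : ℝ)⁻¹ • (β + β')) ((θ0 + θ0') / 2)
      ≤ (scoraLoss x f g sb2 s02 C Rt β θ0 + scoraLoss x f g sb2 s02 C Rt β' θ0') / 2
        - ‖β - β'‖ ^ 2 / (8 * sb2) - (θ0 - θ0') ^ 2 / (8 * s02) := by
  have inner_mid (v : EuclideanSpace ℝ (Fin Dd)) :
      ⟪v, (2 : ℝ)⁻¹ • (β + β')⟫ = (⟪v, β⟫ + ⟪v, β'⟫) / 2 := by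
    rw [real_inner_smul_right, inner_add_right]; ring
  have comparisons := C.sum_map_le_sum_map_add_div_two
      (fun q γ => cgfm f ⟪x q.1 - x q.2.1, γ⟫ - q.2.2 * ⟪x q.1 - x q.2.1, γ⟫)
      β β' ((2 : ℝ)⁻¹ • (β + β')) fun q _ => by
    rw [inner_mid]
    exact cgfm_sub_mul_add_div_two_le hf q.2.2 ⟪x q.1 - x q.2.1, β⟫ ⟪x q.1 - x q.2.1, β'⟫
  have ratings := Rt.sum_map_le_sum_map_add_div_two
      (fun q (p : EuclideanSpace ℝ (Fin Dd) × ℝ) =>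
        cgfm g (⟪x q.1, p.1⟫ - p.2) - q.2 * (⟪x q.1, p.1⟫ - p.2))
      (β, θ0) (β', θ0') ((2 : ℝ)⁻¹ • (β + β'), (θ0 + θ0') / 2) fun q _ => by
    rw [inner_mid, show (⟪x q.1, β⟫ + ⟪x q.1, β'⟫) / 2 - (θ0 + θ0') / 2
      = ((⟪x q.1, β⟫ - θ0) + (⟪x q.1, β'⟫ - θ0')) / 2 by ring]
    exact cgfm_sub_mul_add_div_two_le hg q.2 (⟪x q.1, β⟫ - θ0) (⟪x q.1, β'⟫ - θ0')
  have prior : ‖(2 : ℝ)⁻¹ • (β + β')‖ ^ 2 / (2 * sb2) + ((θ0 + θ0') / 2) ^ 2 / (2 * s02)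
      = (‖β‖ ^ 2 / (2 * sb2) + θ0 ^ 2 / (2 * s02)
          + (‖β'‖ ^ 2 / (2 * sb2) + θ0' ^ 2 / (2 * s02))) / 2
        - ‖β - β'‖ ^ 2 / (8 * sb2) - (θ0 - θ0') ^ 2 / (8 * s02) := by
    rw [norm_inv_two_smul_add_sq]; ring
  dsimp only at ratings
  simp only [scoraLoss]
  linarith

lemma scoraLoss_cons {Dd A : ℕ} (x : Fin A → EuclideanSpace ℝ (Fin Dd))
    (f g : Measure ℝ) (sb2 s02 : ℝ) (C : Multiset (Fin A × Fin A × ℝ))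
    (Rt : Multiset (Fin A × ℝ)) (b c : Fin A) (r : ℝ)
    (β : EuclideanSpace ℝ (Fin Dd)) (θ0 : ℝ) :
    scoraLoss x f g sb2 s02 ((b, c, r) ::ₘ C) Rt β θ0
      = scoraLoss x f g sb2 s02 ((b, c, 0) ::ₘ C) Rt β θ0 - r * ⟪x b - x c, β⟫ := by
  simp only [scoraLoss, Multiset.map_cons, Multiset.sum_cons]; ring

lemma scoraLoss_minimizer_unique {Dd A : ℕ} (x : Fin A → EuclideanSpace ℝ (Fin Dd))
    {f g : Measure ℝ} (hf : HasExpMoments f) (hg : HasExpMoments g)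
    {sb2 s02 : ℝ} (hsb : 0 < sb2) (hs0 : 0 < s02)
    (C : Multiset (Fin A × Fin A × ℝ)) (Rt : Multiset (Fin A × ℝ))
    {β β' : EuclideanSpace ℝ (Fin Dd)} {θ0 θ0' : ℝ}
    (hmin : ∀ γ t, scoraLoss x f g sb2 s02 C Rt β θ0 ≤ scoraLoss x f g sb2 s02 C Rt γ t)
    (hmin' : ∀ γ t, scoraLoss x f g sb2 s02 C Rt β' θ0' ≤ scoraLoss x f g sb2 s02 C Rt γ t) :
    β = β' := by
  have hmid := hmin ((2 : ℝ)⁻¹ • (β + β')) ((θ0 + θ0') / 2)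
  have hconv := scoraLoss_inv_two_smul_add_le x hf hg sb2 s02 C Rt β β' θ0 θ0'
  have hθ : 0 ≤ (θ0 - θ0') ^ 2 / (8 * s02) := by positivity
  have hβ : ‖β - β'‖ ^ 2 / (8 * sb2) ≤ 0 := by linarith [hmin β' θ0', hmin' β θ0]
  have hβ' : ‖β - β'‖ ^ 2 ≤ 0 := by
    simpa using (div_le_iff₀ (by positivity : (0 : ℝ) < 8 * sb2)).1 hβ
  exact sub_eq_zero.1 (by simpa using hβ')

lemma le_of_forall_sub_mul_le {α : Type*} {F s : α → ℝ} {r r' : ℝ} (hrr : r' < r) {p p' : α}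
    (hp : ∀ q, F p - r * s p ≤ F q - r * s q) (hp' : ∀ q, F p' - r' * s p' ≤ F q - r' * s q) :
    s p' ≤ s p := by
  nlinarith [hp p', hp' p]

theorem scora_pairwise_monotone_comparisons_general
    {Dd A : ℕ} (x : Fin A → EuclideanSpace ℝ (Fin Dd))
    (f g : Measure ℝ)
    (hf : HasExpMoments f) (hg : HasExpMoments g)
    (sb2 s02 : ℝ) (hsb : 0 < sb2) (hs0 : 0 < s02)
    (C0 : Multiset (Fin A × Fin A × ℝ)) (Rt : Multiset (Fin A × ℝ))
    (b c : Fin A) (r r' : ℝ) (hrr : r ≥ r')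
    (β β' : EuclideanSpace ℝ (Fin Dd)) (θ0 θ0' : ℝ)
    (hmin : ∀ (γ : EuclideanSpace ℝ (Fin Dd)) (t : ℝ),
      scoraLoss x f g sb2 s02 ((b, c, r) ::ₘ C0) Rt β θ0
        ≤ scoraLoss x f g sb2 s02 ((b, c, r) ::ₘ C0) Rt γ t)
    (hmin' : ∀ (γ : EuclideanSpace ℝ (Fin Dd)) (t : ℝ),
      scoraLoss x f g sb2 s02 ((b, c, r') ::ₘ C0) Rt β' θ0'
        ≤ scoraLoss x f g sb2 s02 ((b, c, r') ::ₘ C0) Rt γ t) :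
    ⟪x b, β⟫ - ⟪x c, β⟫ ≥ ⟪x b, β'⟫ - ⟪x c, β'⟫ := by
  rw [← inner_sub_left, ← inner_sub_left]
  rcases hrr.lt_or_eq with hlt | rfl
  · exact le_of_forall_sub_mul_le
      (F := fun q => scoraLoss x f g sb2 s02 ((b, c, 0) ::ₘ C0) Rt q.1 q.2)
      (s := fun q => ⟪x b - x c, q.1⟫) (p := (β, θ0)) (p' := (β', θ0')) hlt
      (fun q => by simpa only [scoraLoss_cons (r := r)] using hmin q.1 q.2)
      (fun q => by simpa only [scoraLoss_cons (r := r')] using hmin' q.1 q.2)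
  · rw [scoraLoss_minimizer_unique x hf hg hsb hs0 _ Rt hmin hmin']

/-- pairwise monotonicity of the SCoRa MAP estimator for comparisons.
If two SCoRa datasets share the ratings `Rt` and the comparisons `C0`, except that one
comparison of the pair `(b, c)` has value `r` in the first and `r'` in the second with
`r ≥ r'`, then `θ_b*(D) − θ_c*(D) ≥ θ_b*(D') − θ_c*(D')` (where `θ_a* = x_aᵀ β*`). -/
theorem scora_pairwise_monotone_comparisons
    {Dd A : ℕ} (x : Fin A → EuclideanSpace ℝ (Fin Dd))
    (f g : Measure ℝ) [IsProbabilityMeasure f] [IsProbabilityMeasure g]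
    (hf : HasExpMoments f) (hg : HasExpMoments g)
    (sb2 s02 : ℝ) (hsb : 0 < sb2) (hs0 : 0 < s02)
    (C0 : Multiset (Fin A × Fin A × ℝ)) (Rt : Multiset (Fin A × ℝ))
    (b c : Fin A) (r r' : ℝ) (hrr : r ≥ r')
    (β β' : EuclideanSpace ℝ (Fin Dd)) (θ0 θ0' : ℝ)
    (hmin : ∀ (γ : EuclideanSpace ℝ (Fin Dd)) (t : ℝ),
      scoraLoss x f g sb2 s02 ((b, c, r) ::ₘ C0) Rt β θ0
        ≤ scoraLoss x f g sb2 s02 ((b, c, r) ::ₘ C0) Rt γ t)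
    (hmin' : ∀ (γ : EuclideanSpace ℝ (Fin Dd)) (t : ℝ),
      scoraLoss x f g sb2 s02 ((b, c, r') ::ₘ C0) Rt β' θ0'
        ≤ scoraLoss x f g sb2 s02 ((b, c, r') ::ₘ C0) Rt γ t) :
    ⟪x b, β⟫ - ⟪x c, β⟫ ≥ ⟪x b, β'⟫ - ⟪x c, β'⟫ :=
  scora_pairwise_monotone_comparisons_general x f g hf hg sb2 s02 hsb hs0 C0 Rt b c r r' hrr β β' θ0
    θ0' hmin hmin'

end
end
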